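/- Let n ≥ 4 be an integer. For every real x > 0, the quantity F_n(x) = 2(n−1)·((n−1) + (n−3)·(1 − x·coth x)/sinh²(x)) satisfies 4n(n−1)/3 < F_n(x) < 2(n−1)². -/

import Mathlib

/-!
`F_n(x)` is affine in `g(x) = (1 - x coth x) / sinh² x` with slope `2(n-1)(n-3) > 0`, and the two
bounds are its values at `g = -1/3` and `g = 0` (the limits of `g` at `0` and at `∞`). Since
`g(x) = (sinh x - x cosh x) / sinh³ x`, it suffices that `sinh x < x cosh x < sinh x + sinh³ x / 3`
for `x > 0`; both inequalities hold at `x = 0` with equality and follow by comparing derivatives.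
-/

open Real Set

lemma lt_of_hasDerivAt_pos {f f' : ℝ → ℝ} (hf : ∀ y, HasDerivAt f (f' y) y)
    (hf' : ∀ y, 0 < y → 0 < f' y) {x : ℝ} (hx : 0 < x) : f 0 < f x := by
  have hmono : StrictMonoOn f (Ici 0) :=
    strictMonoOn_of_hasDerivWithinAt_pos (convex_Ici 0)
      (fun y _ ↦ (hf y).continuousAt.continuousWithinAt) (fun y _ ↦ (hf y).hasDerivWithinAt)
      (fun y hy ↦ hf' y (by rwa [interior_Ici, mem_Ioi] at hy))
  exact hmono self_mem_Ici hx.le hx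

namespace Real

lemma hasDerivAt_mul_cosh_sub_sinh (y : ℝ) :
    HasDerivAt (fun t ↦ t * cosh t - sinh t) (y * sinh y) y := by
  refine (((hasDerivAt_id y).mul (hasDerivAt_cosh y)).sub (hasDerivAt_sinh y)).congr_deriv ?_
  simp only [id_eq]
  ring

lemma sinh_lt_mul_cosh {x : ℝ} (hx : 0 < x) : sinh x < x * cosh x := by
  simpa using lt_of_hasDerivAt_pos hasDerivAt_mul_cosh_sub_sinh
    (fun y hy ↦ mul_pos hy (sinh_pos_iff.mpr hy)) hx

lemma mul_cosh_sub_sinh_lt {x : ℝ} (hx : 0 < x) : x * cosh x - sinh x < sinh x ^ 3 / 3 := by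
  have hderiv (y : ℝ) : HasDerivAt (fun t ↦ sinh t ^ 3 / 3 - (t * cosh t - sinh t))
      (sinh y * (sinh y * cosh y - y)) y := by
    refine ((((hasDerivAt_sinh y).pow 3).div_const 3).sub
      (hasDerivAt_mul_cosh_sub_sinh y)).congr_deriv ?_
    push_cast
    ring
  have hderiv_pos (y : ℝ) (hy : 0 < y) : 0 < sinh y * (sinh y * cosh y - y) := by
    -- `sinh y cosh y = sinh (2y) / 2 > y`
    have h2y : 2 * y < sinh (2 * y) := self_lt_sinh_iff.mpr (by linarith)
    rw [sinh_two_mul] at h2y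
    exact mul_pos (sinh_pos_iff.mpr hy) (by linarith)
  have := lt_of_hasDerivAt_pos hderiv hderiv_pos hx
  simp only [sinh_zero, cosh_zero] at this
  linarith

lemma one_sub_mul_coth_div_sinh_sq_mem_Ioo {x : ℝ} (hx : 0 < x) :
    (1 - x * (cosh x / sinh x)) / sinh x ^ 2 ∈ Ioo (-(1 / 3)) 0 := by
  have hs : 0 < sinh x := sinh_pos_iff.mpr hx
  have heq : (1 - x * (cosh x / sinh x)) / sinh x ^ 2 = (sinh x - x * cosh x) / sinh x ^ 3 := by
    field_simp
  have hlower := mul_cosh_sub_sinh_lt hx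
  have hupper := sinh_lt_mul_cosh hx
  rw [heq, mem_Ioo, lt_div_iff₀ (by positivity), div_neg_iff]
  exact ⟨by linarith, Or.inr ⟨by linarith, by positivity⟩⟩

end Real

/-- For an integer `n ≥ 4` and every real `x > 0`, the quantity
`F_n x = 2 (n-1) ((n-1) + (n-3) (1 - x coth x)/sinh² x)` satisfies
`4n(n-1)/3 < F_n x < 2(n-1)²`, where `coth x = cosh x / sinh x`. -/
theorem Fn_bounds_of_four_le (n : ℕ) (hn : 4 ≤ n) (x : ℝ) (hx : 0 < x) :
    4 * (n : ℝ) * ((n : ℝ) - 1) / 3 <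
      2 * ((n : ℝ) - 1) * (((n : ℝ) - 1) +
        ((n : ℝ) - 3) * ((1 - x * (Real.cosh x / Real.sinh x)) / (Real.sinh x) ^ 2)) ∧
    2 * ((n : ℝ) - 1) * (((n : ℝ) - 1) +
        ((n : ℝ) - 3) * ((1 - x * (Real.cosh x / Real.sinh x)) / (Real.sinh x) ^ 2)) <
      2 * ((n : ℝ) - 1) ^ 2 := by
  obtain ⟨hg_lower, hg_upper⟩ := Real.one_sub_mul_coth_div_sinh_sq_mem_Ioo hx
  set g := (1 - x * (Real.cosh x / Real.sinh x)) / Real.sinh x ^ 2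
  have hn' : (4 : ℝ) ≤ n := by exact_mod_cast hn
  have hslope : 0 < ((n : ℝ) - 1) * ((n : ℝ) - 3) := by nlinarith
  constructor
  · nlinarith [mul_pos hslope (show 0 < g + 1 / 3 by linarith)]
  · nlinarith [mul_neg_of_pos_of_neg hslope hg_upper]
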